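/- arXiv:math/0407166 — 6 statements merged into one kernel-verified Lean document; each statement's English description precedes it below -/
import Mathlib

section
/- For every positive integer n, 1/(3n) ≤ |2^n - 1|_3 ≤ 1. -/
theorem padicNorm_two_pow_sub_one_bounds (n : ℕ) (hn : 0 < n) :
    1 / (3 * (n : ℚ)) ≤ padicNorm 3 ((2 : ℚ) ^ n - 1) ∧
    padicNorm 3 ((2 : ℚ) ^ n - 1) ≤ 1 := by
  have h1 : (1:ℕ) ≤ 2 ^ n := Nat.one_le_two_pow
  have h2 : (2:ℚ) ^ n - 1 = ((2 ^ n - 1 : ℕ) : ℚ) := by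
    push_cast [h1]; ring
  rw [h2]
  have hNpos : 0 < 2 ^ n - 1 := by
    have : 2 ≤ 2 ^ n := Nat.one_lt_two_pow_iff.mpr hn.ne'
    omega
  -- key: 3 ^ padicValNat 3 (2^n - 1) ≤ 3 * n
  have key : 3 ^ padicValNat 3 (2 ^ n - 1) ≤ 3 * n := by
    rcases Nat.even_or_odd n with ⟨m, hm⟩ | ⟨m, hm⟩
    · have hm0 : m ≠ 0 := by omega
      have hval : padicValNat 3 (4 ^ m - 1 ^ m) =
          padicValNat 3 (4 - 1) + padicValNat 3 m :=
        padicValNat.pow_sub_pow (p := 3) (by decide) (by norm_num)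
          (by norm_num) (by norm_num) hm0
      have h4 : 2 ^ n = 4 ^ m := by
        rw [hm, ← two_mul, pow_mul]; norm_num
      rw [h4]
      simp only [one_pow] at hval
      rw [hval]
      have : padicValNat 3 3 = 1 := padicValNat.self (by norm_num)
      norm_num [this]
      have hdvd : 3 ^ padicValNat 3 m ≤ m :=
        Nat.le_of_dvd (by omega) pow_padicValNat_dvd
      calc 3 ^ (1 + padicValNat 3 m) = 3 * 3 ^ padicValNat 3 m := by ring
        _ ≤ 3 * m := by omega
        _ ≤ 3 * n := by omega
    · have hval : padicValNat 3 (2 ^ n - 1) = 0 := by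
        apply padicValNat.eq_zero_of_not_dvd
        have h4 : 4 ^ m % 3 = 1 := by
          rw [Nat.pow_mod]; norm_num
        have h2n : 2 ^ n = 2 * 4 ^ m := by
          rw [hm, pow_add, pow_mul]; ring
        rw [h2n]
        intro hdvd
        have := Nat.one_le_two_pow (n := m)
        omega
      rw [hval]; omega
  have hne : ((2 ^ n - 1 : ℕ) : ℚ) ≠ 0 := by
    exact_mod_cast hNpos.ne'
  constructor
  · rw [padicNorm.eq_zpow_of_nonzero hne, padicValRat.of_nat]
    rw [zpow_neg, zpow_natCast]
    rw [one_div, inv_le_inv₀ (by positivity) (by positivity)]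
    exact_mod_cast key
  · rw [show ((2 ^ n - 1 : ℕ) : ℚ) = (((2 ^ n - 1 : ℕ) : ℤ) : ℚ) by push_cast; ring]
    exact padicNorm.of_int _
end

section
/- Let a_n = (2^n - 1)·|2^n - 1|_3, where |·|_3 is the 3-adic absolute value (so a_n is a positive integer). Then (1/n)·log(a_n) converges to log 2 as n → ∞. -/
/-!
Removing the 3-part of `2 ^ n - 1` costs at most a factor `3 * n`: by lifting the exponent,
`v₃(2 ^ n - 1)` is `0` for odd `n` and `1 + v₃(n / 2)` for even `n`. Hence
`2 ^ n / (6 * n) ≤ a_n ≤ 2 ^ n`, and the polynomial factor disappears in `log a_n / n`.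
-/

open Filter Topology Real

theorem three_pow_padicValNat_two_pow_sub_one_dvd (n : ℕ) :
    3 ^ padicValNat 3 (2 ^ n - 1) ∣ 3 * n := by
  rcases n.even_or_odd' with ⟨m, rfl | rfl⟩
  · rcases eq_or_ne m 0 with rfl | hm
    · simp
    have hval : padicValNat 3 (2 ^ (2 * m) - 1) = 1 + padicValNat 3 m := by
      rw [pow_mul, ← one_pow m, padicValNat.pow_sub_pow (by decide) (by norm_num) (by norm_num)
        (by norm_num) hm]
      norm_num
    rw [hval, pow_add, pow_one]
    exact mul_dvd_mul_left 3 (pow_padicValNat_dvd.trans (dvd_mul_left m 2))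
  · have hmod : 2 ^ (2 * m + 1) % 3 = 2 := by
      rw [pow_succ, pow_mul, Nat.mul_mod, Nat.pow_mod]
      norm_num
    have hndvd : ¬3 ∣ 2 ^ (2 * m + 1) - 1 := by
      generalize 2 ^ (2 * m + 1) = x at hmod
      omega
    rw [padicValNat.eq_zero_of_not_dvd hndvd, pow_zero]
    exact one_dvd _

theorem natCast_mul_padicNorm_eq_ordCompl (p : ℕ) [hp : Fact p.Prime] (m : ℕ) :
    (m : ℚ) * padicNorm p m = (ordCompl[p] m : ℕ) := by
  rcases eq_or_ne m 0 with rfl | hm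
  · simp
  rw [Nat.cast_div (Nat.ordProj_dvd m p) (by simp [hp.out.ne_zero]),
    padicNorm.eq_zpow_of_nonzero (by exact_mod_cast hm), padicValRat.of_nat,
    Nat.factorization_def m hp.out, zpow_neg, zpow_natCast, div_eq_mul_inv]
  push_cast
  rfl

theorem two_pow_le_six_mul_ordCompl_two_pow_sub_one {n : ℕ} (hn : 1 ≤ n) :
    2 ^ n ≤ 6 * n * ordCompl[3] (2 ^ n - 1) := by
  have hproj : ordProj[3] (2 ^ n - 1) ≤ 3 * n := by
    rw [Nat.factorization_def _ Nat.prime_three]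
    exact Nat.le_of_dvd (by omega) (three_pow_padicValNat_two_pow_sub_one_dvd n)
  have h2 : 2 ≤ 2 ^ n := by simpa using Nat.pow_le_pow_right two_pos hn
  calc 2 ^ n ≤ 2 * (2 ^ n - 1) := by omega
    _ = 2 * (ordProj[3] (2 ^ n - 1) * ordCompl[3] (2 ^ n - 1)) := by
      rw [Nat.ordProj_mul_ordCompl_eq_self]
    _ ≤ 2 * (3 * n * ordCompl[3] (2 ^ n - 1)) := by gcongr
    _ = 6 * n * ordCompl[3] (2 ^ n - 1) := by ring

theorem tendsto_log_mul_natCast_div_atTop (C : ℝ) :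
    Tendsto (fun n : ℕ => log (C * n) / n) atTop (𝓝 0) := by
  rcases eq_or_ne C 0 with rfl | hC
  · simp
  have hlog : Tendsto (fun n : ℕ => log n / n) atTop (𝓝 0) :=
    isLittleO_log_id_atTop.tendsto_div_nhds_zero.comp tendsto_natCast_atTop_atTop
  have hconst : Tendsto (fun n : ℕ => log C * (n : ℝ)⁻¹) atTop (𝓝 0) := by
    simpa using tendsto_one_div_atTop_nhds_zero_nat.const_mul (log C)
  have hsum := hconst.add hlog
  rw [add_zero] at hsum
  refine hsum.congr' ?_
  filter_upwards [eventually_gt_atTop 0] with n hn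
  rw [log_mul hC (by positivity), add_div, div_eq_mul_inv (log C)]

theorem tendsto_log_div_of_pow_le_mul_of_le_pow {a : ℕ → ℝ} {r C : ℝ} (hr : 0 < r)
    (hC : 0 < C) (hlow : ∀ᶠ n in atTop, r ^ n ≤ C * n * a n)
    (hup : ∀ᶠ n in atTop, a n ≤ r ^ n) :
    Tendsto (fun n : ℕ => log (a n) / n) atTop (𝓝 (log r)) := by
  have hpos : ∀ᶠ n : ℕ in atTop, 0 < (n : ℝ) ∧ 0 < a n := by
    filter_upwards [hlow, eventually_gt_atTop 0] with n hn hn0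
    have hn0' : (0 : ℝ) < n := by exact_mod_cast hn0
    exact ⟨hn0', pos_of_mul_pos_right ((pow_pos hr n).trans_le hn) (by positivity)⟩
  have hbelow : Tendsto (fun n : ℕ => log r - log (C * n) / n) atTop (𝓝 (log r)) := by
    simpa using tendsto_const_nhds.sub (tendsto_log_mul_natCast_div_atTop C)
  refine tendsto_of_tendsto_of_tendsto_of_le_of_le' hbelow tendsto_const_nhds ?_ ?_
  · filter_upwards [hlow, hpos] with n hn ⟨hn0, ha⟩
    have : n * log r ≤ log (C * n) + log (a n) := by
      rw [← log_pow, ← log_mul (by positivity) ha.ne']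
      exact log_le_log (by positivity) hn
    rw [le_div_iff₀ hn0, sub_mul, div_mul_cancel₀ _ hn0.ne']
    linarith
  · filter_upwards [hup, hpos] with n hn ⟨hn0, ha⟩
    rw [div_le_iff₀ hn0, mul_comm, ← log_pow]
    exact log_le_log ha hn

theorem growth_rate_periodic_points :
    Filter.Tendsto
      (fun n : ℕ =>
        Real.log ((((2 : ℚ) ^ n - 1) * padicNorm 3 ((2 : ℚ) ^ n - 1) : ℚ) : ℝ) / (n : ℝ))
      Filter.atTop (nhds (Real.log 2)) := by
  have hcast (n : ℕ) : (2 : ℚ) ^ n - 1 = ((2 ^ n - 1 : ℕ) : ℚ) := by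
    rw [Nat.cast_sub Nat.one_le_two_pow]
    push_cast
    rfl
  simp only [hcast, natCast_mul_padicNorm_eq_ordCompl, Rat.cast_natCast]
  refine tendsto_log_div_of_pow_le_mul_of_le_pow two_pos (by norm_num : (0 : ℝ) < 6) ?_ ?_
  · filter_upwards [eventually_ge_atTop 1] with n hn
    exact_mod_cast two_pow_le_six_mul_ordCompl_two_pow_sub_one hn
  · filter_upwards with n
    exact_mod_cast ((Nat.ordCompl_le _ 3).trans (Nat.sub_le _ 1))
end

section
/- Let O : ℕ≥1 → ℕ and define F(n) = Σ_{d|n} d·O(d). Define O' : ℕ≥1 → ℚ by O'(n) = 2·O(2n) + O(n) if n is odd and O'(n) = 2·O(2n) if n is even. Then for all n ≥ 1, Σ_{d|n} d·O'(d) = F(2n). -/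
/-!
The divisors of `2 * n` are the doubles `2 * d` of the divisors `d` of `n`, together with the odd
divisors of `n`. The first kind contribute the terms `d * 2 * O (2 * d)` of `O'`, the second the
extra terms `d * O d` at odd `d`.
-/

open Finset

namespace Nat

variable {p : ℕ}

theorem filter_dvd_divisors_prime_mul (hp : p.Prime) (n : ℕ) :
    {e ∈ (p * n).divisors | p ∣ e} = n.divisors.image (p * ·) := by
  ext e
  simp only [mem_filter, mem_image, mem_divisors, mul_ne_zero_iff, ne_eq]
  constructor
  · rintro ⟨⟨he, -, hn⟩, d, rfl⟩
    exact ⟨d, ⟨Nat.dvd_of_mul_dvd_mul_left hp.pos he, hn⟩, rfl⟩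
  · rintro ⟨d, ⟨hd, hn⟩, rfl⟩
    exact ⟨⟨mul_dvd_mul_left p hd, hp.ne_zero, hn⟩, dvd_mul_right p d⟩

theorem filter_not_dvd_divisors_prime_mul (hp : p.Prime) (n : ℕ) :
    {e ∈ (p * n).divisors | ¬p ∣ e} = {d ∈ n.divisors | ¬p ∣ d} := by
  ext e
  simp only [mem_filter, mem_divisors, mul_ne_zero_iff, and_congr_left_iff]
  intro hpe
  have hcop : e.Coprime p := (hp.coprime_iff_not_dvd.mpr hpe).symm
  rw [hcop.dvd_mul_left]
  exact ⟨fun ⟨hd, _, hn⟩ => ⟨hd, hn⟩, fun ⟨hd, hn⟩ => ⟨hd, hp.ne_zero, hn⟩⟩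

theorem sum_divisors_prime_mul {M : Type*} [AddCommMonoid M] (hp : p.Prime) (n : ℕ)
    (f : ℕ → M) :
    ∑ e ∈ (p * n).divisors, f e =
      ∑ d ∈ n.divisors, f (p * d) + ∑ d ∈ n.divisors with ¬p ∣ d, f d := by
  rw [← sum_filter_add_sum_filter_not _ (p ∣ ·), filter_dvd_divisors_prime_mul hp,
    filter_not_dvd_divisors_prime_mul hp,
    sum_image fun _ _ _ _ h => Nat.eq_of_mul_eq_mul_left hp.pos h]

end Nat

theorem orbit_count_square (O : ℕ → ℕ) (F : ℕ → ℕ)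
    (hF : ∀ n, 1 ≤ n → F n = ∑ d ∈ n.divisors, d * O d)
    (O' : ℕ → ℚ)
    (hO' : ∀ n, O' n = if Odd n then 2 * O (2 * n) + O n else 2 * O (2 * n)) :
    ∀ n, 1 ≤ n → Finset.sum n.divisors (fun d : ℕ => (d : ℚ) * O' d) = (F (2 * n) : ℚ) := by
  intro n hn
  calc ∑ d ∈ n.divisors, (d : ℚ) * O' d
      = ∑ d ∈ n.divisors, ((2 * d : ℕ) : ℚ) * O (2 * d)
          + ∑ d ∈ n.divisors with ¬2 ∣ d, (d : ℚ) * O d := by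
        rw [sum_filter, ← sum_add_distrib]
        refine sum_congr rfl fun d _ => ?_
        simp only [hO', Nat.two_dvd_ne_zero, ← Nat.odd_iff]
        split_ifs <;> push_cast <;> ring
    _ = ∑ e ∈ (2 * n).divisors, (e : ℚ) * O e := by
        rw [Nat.sum_divisors_prime_mul Nat.prime_two]
    _ = F (2 * n) := by rw [hF (2 * n) (by omega)]; push_cast; rfl
end

section
/- For every positive integer n, Σ_{d | n, d < n} (2^d - 1) ≤ (2/3)·(2^n - 1). -/
/-! A proper divisor `d` of `n` satisfies `2 d ≤ n`, so with `m = n / 2` the sum is at most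
`∑_{d ≤ m} (2^d - 1) ≤ 2^(m+1) - 2`. Writing `x = 2^m`, the bound `2^(m+1) - 2 ≤ (2/3)(2^n - 1)`
follows from `2^n ≥ x^2` and `(x - 1)(x - 2) ≥ 0`. -/

open Finset

theorem Nat.two_mul_le_of_mem_properDivisors {n d : ℕ} (hd : d ∈ n.properDivisors) :
    2 * d ≤ n := by
  obtain ⟨⟨c, rfl⟩, hlt⟩ := Nat.mem_properDivisors.mp hd
  have hc : 2 ≤ c := by
    by_contra! hc
    interval_cases c <;> omega
  nlinarith

theorem Nat.properDivisors_subset_range_half_succ (n : ℕ) :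
    n.properDivisors ⊆ range (n / 2 + 1) := fun d hd => by
  have := Nat.two_mul_le_of_mem_properDivisors hd
  rw [mem_range]
  omega

theorem sum_range_two_pow_sub_one_le (m : ℕ) :
    ∑ d ∈ range (m + 1), ((2 : ℚ) ^ d - 1) ≤ 2 ^ (m + 1) - 2 := by
  induction m with
  | zero => simp
  | succ m ih =>
    rw [sum_range_succ, pow_succ 2 (m + 1)]
    linarith

theorem Nat.three_mul_le_sq_add_two (x : ℕ) : 3 * x ≤ x ^ 2 + 2 := by
  rcases le_or_gt x 1 with hx | hx
  · interval_cases x <;> norm_num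
  · nlinarith

theorem two_pow_succ_sub_two_le {m n : ℕ} (h : 2 * m ≤ n) :
    (2 : ℚ) ^ (m + 1) - 2 ≤ 2 / 3 * (2 ^ n - 1) := by
  have hsq : ((2 : ℚ) ^ m) ^ 2 ≤ 2 ^ n := by
    rw [← pow_mul, mul_comm]
    exact pow_le_pow_right₀ one_le_two h
  have hx : 3 * (2 : ℚ) ^ m ≤ (2 ^ m) ^ 2 + 2 := by
    exact_mod_cast Nat.three_mul_le_sq_add_two (2 ^ m)
  rw [pow_succ]
  linarith

theorem proper_divisor_sum_bound_general (n : ℕ) :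
    ∑ d ∈ n.properDivisors, ((2 : ℚ) ^ d - 1) ≤ (2 / 3) * ((2 : ℚ) ^ n - 1) := by
  have hterm : ∀ d ∈ range (n / 2 + 1), d ∉ n.properDivisors → (0 : ℚ) ≤ 2 ^ d - 1 :=
    fun d _ _ => sub_nonneg.mpr (one_le_pow₀ one_le_two)
  calc ∑ d ∈ n.properDivisors, ((2 : ℚ) ^ d - 1)
      ≤ ∑ d ∈ range (n / 2 + 1), ((2 : ℚ) ^ d - 1) :=
        sum_le_sum_of_subset_of_nonneg (Nat.properDivisors_subset_range_half_succ n) hterm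
    _ ≤ 2 ^ (n / 2 + 1) - 2 := sum_range_two_pow_sub_one_le _
    _ ≤ 2 / 3 * (2 ^ n - 1) := two_pow_succ_sub_two_le (Nat.mul_div_le n 2)

theorem proper_divisor_sum_bound (n : ℕ) (hn : 0 < n) :
    ∑ d ∈ n.properDivisors, ((2 : ℚ) ^ d - 1) ≤ (2 / 3) * ((2 : ℚ) ^ n - 1) :=
  proper_divisor_sum_bound_general n
end

section
/- With O_g(n) = (1/n)Σ_{d|n} μ(n/d)(2^d - 1) (the number of closed orbits of length n for the circle doubling map), one has Σ_{n ≤ X} O_g(2n) ~ (2/3)·4^X / X as X → ∞. -/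
/-!
The summand is the orbit count `O_a(N) = (1/N) ∑_{d ∣ N} μ(N/d) (a^d - 1)` at `a = 2`, `N = 2n`.
Apart from `d = N`, every divisor satisfies `d ≤ N/2`, so `O_a(N) = a^N/N + O(a^{N/2})` and hence
`O_a(N) ~ a^N/N`. Summing asymptotic equivalences with nonnegative, divergent right-hand sides
preserves them, so the sum is asymptotic to `(1/2) ∑_{n ≤ X} 4^n/n`. Finally
`∑_{n ≤ X} r^n/n ~ r/(r-1) · r^X/X`, because the increments of `r/(r-1) · r^X/X` are
`r^n/n · (1 - 1/((r-1)(n-1)))`.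
-/
open Filter Asymptotics Finset Topology

lemma tendsto_pow_div_natCast_atTop {r : ℝ} (hr : 1 < r) :
    Tendsto (fun n : ℕ => r ^ n / n) atTop atTop := by
  have h := tendsto_pow_const_div_const_pow_of_one_lt 1 hr
  simp only [pow_one] at h
  have hpos : Tendsto (fun n : ℕ => (n : ℝ) / r ^ n) atTop (𝓝[>] 0) :=
    tendsto_nhdsWithin_iff.2 ⟨h, (eventually_gt_atTop 0).mono fun n hn => by
      have : (0 : ℝ) < n := by exact_mod_cast hn
      exact div_pos this (by positivity)⟩
  exact hpos.inv_tendsto_nhdsGT_zero.congr fun n => inv_div _ _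

lemma sum_Icc_one_eq_sum_range {M : Type*} [AddCommMonoid M] (w : ℕ → M) (X : ℕ) :
    ∑ n ∈ Icc 1 X, w n = ∑ k ∈ range X, w (k + 1) := by
  induction X with
  | zero => simp
  | succ X ih => rw [sum_Icc_succ_top (by omega), ih, sum_range_succ]

theorem Asymptotics.IsEquivalent.sum_Icc_one {u v : ℕ → ℝ} (huv : u ~[atTop] v)
    (hv : ∀ n, 0 ≤ v n) (htop : Tendsto (fun X => ∑ n ∈ Icc 1 X, v n) atTop atTop) :
    (fun X => ∑ n ∈ Icc 1 X, u n) ~[atTop] fun X => ∑ n ∈ Icc 1 X, v n := by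
  simp only [sum_Icc_one_eq_sum_range] at htop ⊢
  have h := (huv.comp_tendsto (tendsto_add_atTop_nat 1)).isLittleO.sum_range (fun n => hv _) htop
  refine IsLittleO.isEquivalent (h.congr_left fun X => ?_)
  simp [sum_sub_distrib]

/-- For an integer `a ≥ 2`, the number of closed orbits of length `N` of `x ↦ a x` on the circle. -/
noncomputable def orbitCount (a : ℝ) (N : ℕ) : ℝ :=
  (1 / (N : ℝ)) * ∑ d ∈ N.divisors, (ArithmeticFunction.moebius (N / d) : ℝ) * (a ^ d - 1)

lemma abs_sum_properDivisors_moebius_mul_le {a : ℝ} (ha : 1 ≤ a) (N : ℕ) :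
    |∑ d ∈ N.properDivisors, (ArithmeticFunction.moebius (N / d) : ℝ) * (a ^ d - 1)| ≤
      N * √a ^ N := by
  have hterm : ∀ d ∈ N.properDivisors,
      |(ArithmeticFunction.moebius (N / d) : ℝ) * (a ^ d - 1)| ≤ √a ^ N := by
    intro d hd
    obtain ⟨k, hk, rfl⟩ := (Nat.mem_properDivisors_iff_exists (by
      rintro rfl; simp at hd)).1 hd
    have hmu : |(ArithmeticFunction.moebius (d * k / d) : ℝ)| ≤ 1 := by
      exact_mod_cast ArithmeticFunction.abs_moebius_le_one
    have hpow : a ^ d ≤ √a ^ (d * k) := calc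
      a ^ d = √a ^ (2 * d) := by rw [pow_mul, Real.sq_sqrt (by linarith)]
      _ ≤ √a ^ (d * k) := pow_le_pow_right₀ (Real.one_le_sqrt.2 ha) (by nlinarith)
    rw [abs_mul, abs_of_nonneg (sub_nonneg.2 (one_le_pow₀ ha))]
    nlinarith [abs_nonneg (ArithmeticFunction.moebius (d * k / d) : ℝ), one_le_pow₀ (n := d) ha]
  calc _ ≤ ∑ d ∈ N.properDivisors, |(ArithmeticFunction.moebius (N / d) : ℝ) * (a ^ d - 1)| :=
        abs_sum_le_sum_abs _ _
    _ ≤ #N.properDivisors * √a ^ N := by simpa using sum_le_sum hterm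
    _ ≤ N * √a ^ N := by
        gcongr
        exact_mod_cast (card_le_card Nat.properDivisors_subset_divisors).trans
          (Nat.card_divisors_le_self N)

lemma abs_orbitCount_sub_le {a : ℝ} (ha : 1 ≤ a) {N : ℕ} (hN : 1 ≤ N) :
    |orbitCount a N - a ^ N / N| ≤ 2 * √a ^ N := by
  set E := ∑ d ∈ N.properDivisors, (ArithmeticFunction.moebius (N / d) : ℝ) * (a ^ d - 1)
  have hN' : (1 : ℝ) ≤ N := by exact_mod_cast hN
  have hsplit : orbitCount a N - a ^ N / N = (E - 1) / N := by
    rw [orbitCount, ← Nat.cons_self_properDivisors (by omega), sum_cons, Nat.div_self hN]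
    simp only [ArithmeticFunction.moebius_apply_one, Int.cast_one, one_mul]
    field_simp
    ring
  have hE := abs_sum_properDivisors_moebius_mul_le ha N
  have hsqrt : 1 ≤ √a ^ N := one_le_pow₀ (Real.one_le_sqrt.2 ha)
  rw [hsplit, abs_div, Nat.abs_cast, div_le_iff₀ (by positivity)]
  calc |E - 1| ≤ |E| + 1 := by simpa using abs_sub E 1
    _ ≤ 2 * √a ^ N * N := by nlinarith

lemma orbitCount_isEquivalent {a : ℝ} (ha : 1 < a) :
    orbitCount a ~[atTop] fun N => a ^ N / N := by
  have hsqrt : 1 < √a := (Real.lt_sqrt zero_le_one).2 (by simpa using ha)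
  have hbigO : (orbitCount a - fun N : ℕ => a ^ N / N) =O[atTop] fun N => √a ^ N :=
    IsBigO.of_bound 2 <| (eventually_ge_atTop 1).mono fun N hN => by
      rw [Pi.sub_apply, Real.norm_eq_abs, norm_pow, Real.norm_of_nonneg (Real.sqrt_nonneg a)]
      exact abs_orbitCount_sub_le ha.le hN
  have hone : (fun _ => (1 : ℝ)) =o[atTop] fun N : ℕ => √a ^ N / N :=
    isLittleO_one_left_iff ℝ |>.2 <| tendsto_abs_atTop_atTop.comp
      (tendsto_pow_div_natCast_atTop hsqrt)
  refine IsLittleO.isEquivalent <| hbigO.trans_isLittleO ?_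
  have h := (isBigO_refl (fun N : ℕ => √a ^ N) atTop).mul_isLittleO hone
  refine h.congr (fun N => mul_one _) fun N => ?_
  rw [mul_div_assoc', ← mul_pow, Real.mul_self_sqrt (by linarith)]

lemma tendsto_sum_Icc_pow_div_atTop {r : ℝ} (hr : 1 < r) :
    Tendsto (fun X : ℕ => ∑ n ∈ Icc 1 X, r ^ n / n) atTop atTop := by
  refine tendsto_atTop_mono' atTop ?_ (tendsto_pow_div_natCast_atTop hr)
  filter_upwards [eventually_ge_atTop 1] with X hX
  exact single_le_sum (f := fun n : ℕ => r ^ n / (n : ℝ)) (fun n _ => by positivity)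
    (mem_Icc.2 ⟨hX, le_rfl⟩)

lemma sum_Icc_pow_div_isEquivalent {r : ℝ} (hr : 1 < r) :
    (fun X : ℕ => ∑ n ∈ Icc 1 X, r ^ n / n) ~[atTop] fun X : ℕ => r / (r - 1) * r ^ X / X := by
  set b : ℕ → ℝ := fun X => r / (r - 1) * r ^ X / X
  have hratio : ∀ n : ℕ, 2 ≤ n →
      (b n - b (n - 1)) / (r ^ n / n) = 1 - 1 / ((r - 1) * ((n : ℝ) - 1)) := by
    intro n hn
    have hn' : (2 : ℝ) ≤ n := by exact_mod_cast hn
    have hr' : r - 1 ≠ 0 := by linarith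
    have hn1 : (n : ℝ) - 1 ≠ 0 := by linarith
    obtain ⟨m, rfl⟩ : ∃ m, n = m + 1 := ⟨n - 1, by omega⟩
    simp only [b, Nat.add_sub_cancel, Nat.cast_add, Nat.cast_one, add_sub_cancel_right] at hn1 ⊢
    field_simp
    ring
  have hlim : Tendsto (fun n : ℕ => 1 - 1 / ((r - 1) * ((n : ℝ) - 1))) atTop (𝓝 1) := by
    have h := (tendsto_atTop_add_const_right atTop (-1) tendsto_natCast_atTop_atTop).const_mul_atTop
      (sub_pos.2 hr)
    simpa [← sub_eq_add_neg] using tendsto_const_nhds.sub (tendsto_inv_atTop_zero.comp h)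
  have hdiff : (fun n => b n - b (n - 1)) ~[atTop] fun n => r ^ n / n :=
    isEquivalent_of_tendsto_one <| hlim.congr' <|
      (eventually_ge_atTop 2).mono fun n hn => (hratio n hn).symm
  have htel : ∀ X, ∑ n ∈ Icc 1 X, (b n - b (n - 1)) = b X := fun X => by
    simp only [sum_Icc_one_eq_sum_range, Nat.add_sub_cancel]
    rw [sum_range_sub]
    -- `b 0 = 0` because `(0 : ℝ)⁻¹ = 0`
    simp [b]
  have h := hdiff.sum_Icc_one (fun n => by positivity) (tendsto_sum_Icc_pow_div_atTop hr)
  simp only [htel] at h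
  exact h.symm

theorem even_length_orbit_sum_asymptotic :
    Filter.Tendsto
      (fun X : ℕ =>
        (∑ n ∈ Finset.Icc 1 X,
            ((1 / ((2 * n : ℕ) : ℝ)) * ∑ d ∈ (2 * n).divisors,
              (ArithmeticFunction.moebius ((2 * n) / d) : ℝ) * ((2 : ℝ) ^ d - 1))) /
          ((2 / 3) * (4 : ℝ) ^ X / (X : ℝ)))
      Filter.atTop (nhds 1) := by
  have h4 : (1 : ℝ) < 4 := by norm_num
  have hterm : (fun n => orbitCount 2 (2 * n)) ~[atTop] fun n => 1 / 2 * ((4 : ℝ) ^ n / n) :=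
    ((orbitCount_isEquivalent one_lt_two).comp_tendsto
      (tendsto_id.const_mul_atTop' two_pos)).congr_right <| Eventually.of_forall fun n => by
        simp only [Function.comp_apply, id, pow_mul]
        push_cast
        ring
  have htop : Tendsto (fun X : ℕ => ∑ n ∈ Icc 1 X, 1 / 2 * ((4 : ℝ) ^ n / n)) atTop atTop := by
    simpa only [← mul_sum] using (tendsto_sum_Icc_pow_div_atTop h4).const_mul_atTop one_half_pos
  have hsum : (fun X : ℕ => ∑ n ∈ Icc 1 X, orbitCount 2 (2 * n)) ~[atTop]
      fun X : ℕ => 2 / 3 * (4 : ℝ) ^ X / X := by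
    refine ((hterm.sum_Icc_one (fun n => by positivity) htop).congr_right
      (Eventually.of_forall fun X => (mul_sum _ _ _).symm)).trans ?_
    refine ((IsEquivalent.refl (u := fun _ : ℕ => (1 / 2 : ℝ))).mul
      (sum_Icc_pow_div_isEquivalent h4)).congr_right (Eventually.of_forall fun X => ?_)
    simp only [Pi.mul_apply]
    ring
  have hz : ∀ᶠ X : ℕ in atTop, 2 / 3 * (4 : ℝ) ^ X / X ≠ 0 :=
    (eventually_ge_atTop 1).mono fun X hX => by
      have : (1 : ℝ) ≤ X := by exact_mod_cast hX
      positivity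
  exact (isEquivalent_iff_tendsto_one hz).1 hsum
end

section
/- With O_f(n) = (1/n)Σ_{d|n} μ(n/d)(2^d-1)|2^d-1|_3, there exist constants c, C such that (1/2)log X + c ≤ Σ_{n ≤ X} O_f(n)/2^n ≤ log X + C for all X ≥ 2. -/
/-!
Möbius inversion writes `n · O_f(n)` as `(2ⁿ - 1)|2ⁿ - 1|₃` plus a sum over proper divisors
`d ≤ n / 2`, which is `O(2^{n/2})`; hence `O_f(n) / 2ⁿ = |2ⁿ - 1|₃ / n + O((3/4)ⁿ)`. Because
`|2ⁿ - 1|₃ ≤ 1`, the sum of `|2ⁿ - 1|₃ / n` is at most the harmonic sum, and because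
`2ⁿ - 1 ≡ 1 (mod 3)` for odd `n`, it is at least the sum of `1 / n` over odd `n ≤ X`, which is
at least half the harmonic sum up to `X / 2`.
-/

open Finset ArithmeticFunction
open scoped ArithmeticFunction.Moebius

theorem abs_sum_divisors_moebius_mul_sub_self_le (f : ℕ → ℝ) {n : ℕ} (hn : n ≠ 0) :
    |∑ d ∈ n.divisors, (μ (n / d) : ℝ) * f d - f n| ≤ ∑ d ∈ n.properDivisors, |f d| := by
  rw [← Nat.cons_self_properDivisors hn, sum_cons, Nat.div_self (Nat.pos_of_ne_zero hn),
    moebius_apply_one, Int.cast_one, one_mul, add_sub_cancel_left]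
  refine (abs_sum_le_sum_abs _ _).trans (sum_le_sum fun d _ => ?_)
  rw [abs_mul]
  exact mul_le_of_le_one_left (abs_nonneg _) (by exact_mod_cast abs_moebius_le_one)

theorem Nat.le_div_two_of_mem_properDivisors {d n : ℕ} (h : d ∈ n.properDivisors) :
    d ≤ n / 2 := by
  rw [Nat.le_div_iff_mul_le two_pos]
  calc d * 2 ≤ d * (n / d) := Nat.mul_le_mul_left _ (Nat.one_lt_div_of_mem_properDivisors h)
    _ = n := Nat.mul_div_cancel' (Nat.mem_properDivisors.mp h).1

theorem sum_properDivisors_two_pow_lt (n : ℕ) :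
    ∑ d ∈ n.properDivisors, (2 : ℝ) ^ d < 2 ^ (n / 2 + 1) :=
  calc ∑ d ∈ n.properDivisors, (2 : ℝ) ^ d ≤ ∑ d ∈ range (n / 2 + 1), (2 : ℝ) ^ d :=
        sum_le_sum_of_subset_of_nonneg
          (fun _ hd => mem_range_succ_iff.mpr (Nat.le_div_two_of_mem_properDivisors hd))
          (fun _ _ _ => by positivity)
    _ < 2 ^ (n / 2 + 1) := by rw [geom_sum_eq (by norm_num)]; norm_num

theorem abs_sum_divisors_moebius_mul_sub_self_le_two_pow (f : ℕ → ℝ)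
    (hf : ∀ d, |f d| ≤ 2 ^ d) {n : ℕ} (hn : n ≠ 0) :
    |∑ d ∈ n.divisors, (μ (n / d) : ℝ) * f d - f n| ≤ 2 ^ (n / 2 + 1) :=
  (abs_sum_divisors_moebius_mul_sub_self_le f hn).trans
    ((sum_le_sum fun d _ => hf d).trans (sum_properDivisors_two_pow_lt n).le)

theorem two_pow_div_two_le (n : ℕ) : (2 : ℝ) ^ (n / 2) ≤ (3 / 2) ^ n := by
  refine le_of_pow_le_pow_left₀ two_ne_zero (by positivity) ?_
  calc ((2 : ℝ) ^ (n / 2)) ^ 2 = 2 ^ (n / 2 * 2) := (pow_mul _ _ _).symm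
    _ ≤ 2 ^ n := pow_le_pow_right₀ (by norm_num) (Nat.div_mul_le_self n 2)
    _ ≤ ((3 / 2) ^ 2) ^ n := pow_le_pow_left₀ (by norm_num) (by norm_num) n
    _ = ((3 / 2) ^ n) ^ 2 := by rw [← pow_mul, ← pow_mul, mul_comm]

theorem abs_div_two_pow_sub_le {n : ℕ} {B ε : ℝ} (hε₀ : 0 ≤ ε) (hε₁ : ε ≤ 1)
    (hB : |B - (2 ^ n - 1) * ε| ≤ 2 ^ (n / 2 + 1)) : |B / 2 ^ n - ε| ≤ 3 * (3 / 4) ^ n := by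
  have h2n : (0 : ℝ) < 2 ^ n := by positivity
  have hsplit : B / 2 ^ n - ε = (B - (2 ^ n - 1) * ε - ε) / 2 ^ n := by field_simp; ring
  have hrhs : 3 * (3 / 4 : ℝ) ^ n * 2 ^ n = 3 * (3 / 2) ^ n := by
    rw [mul_assoc, ← mul_pow]; norm_num
  rw [hsplit, abs_div, abs_of_pos h2n, div_le_iff₀ h2n, hrhs]
  have hhalf := two_pow_div_two_le n
  have hone : (1 : ℝ) ≤ (3 / 2) ^ n := one_le_pow₀ (by norm_num)
  calc |B - (2 ^ n - 1) * ε - ε| ≤ |B - (2 ^ n - 1) * ε| + |ε| := abs_sub _ _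
    _ ≤ 2 ^ (n / 2 + 1) + 1 := by rw [abs_of_nonneg hε₀]; gcongr
    _ ≤ 3 * (3 / 2) ^ n := by rw [pow_succ]; linarith

theorem padicNorm_two_pow_sub_one_le_one (p : ℕ) [Fact p.Prime] (d : ℕ) :
    padicNorm p ((2 : ℚ) ^ d - 1) ≤ 1 := by
  simpa using padicNorm.of_int (p := p) (2 ^ d - 1)

theorem padicNorm_three_two_pow_sub_one_of_odd {d : ℕ} (hd : Odd d) :
    padicNorm 3 ((2 : ℚ) ^ d - 1) = 1 := by
  rw [show (2 : ℚ) ^ d - 1 = ((2 ^ d - 1 : ℤ) : ℚ) by push_cast; rfl, padicNorm.int_eq_one_iff,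
    ← ZMod.intCast_zmod_eq_zero_iff_dvd]
  push_cast
  rw [show (2 : ZMod 3) = -1 by decide, hd.neg_one_pow]
  decide

theorem sum_Icc_div_le_one_add_log (w : ℕ → ℝ) (hw : ∀ n, w n ≤ 1) (X : ℕ) :
    ∑ n ∈ Icc 1 X, w n / n ≤ 1 + Real.log X :=
  calc ∑ n ∈ Icc 1 X, w n / n ≤ ∑ n ∈ Icc 1 X, (n : ℝ)⁻¹ :=
        sum_le_sum fun n _ => by
          rw [div_eq_mul_inv]; exact mul_le_of_le_one_left (by positivity) (hw n)
    _ = harmonic X := by simp [harmonic_eq_sum_Icc]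
    _ ≤ 1 + Real.log X := harmonic_le_one_add_log X

theorem half_log_sub_le_sum_Icc_div (w : ℕ → ℝ) (hw₀ : ∀ n, 0 ≤ w n)
    (hw_odd : ∀ n, Odd n → w n = 1) (X : ℕ) :
    (Real.log X - Real.log 2) / 2 ≤ ∑ n ∈ Icc 1 X, w n / n := by
  set m := X / 2
  have hlog : Real.log X ≤ Real.log 2 + Real.log (m + 1 : ℕ) := by
    rw [← Real.log_mul two_ne_zero (by positivity)]
    rcases X.eq_zero_or_pos with rfl | hX
    · rw [Nat.cast_zero, Real.log_zero]
      exact Real.log_nonneg (by push_cast; linarith)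
    · exact Real.log_le_log (by positivity) (by exact_mod_cast (by omega : X ≤ 2 * (m + 1)))
  calc (Real.log X - Real.log 2) / 2 ≤ harmonic m / 2 := by
        gcongr; linarith [log_add_one_le_harmonic m]
    _ = ∑ k ∈ range m, 1 / (2 * (k + 1) : ℝ) := by
        rw [harmonic]; push_cast; rw [sum_div]; congr! 1 with k; field_simp
    _ ≤ ∑ k ∈ range m, w (2 * k + 1) / (2 * k + 1 : ℕ) := sum_le_sum fun k _ => by
        rw [hw_odd _ (odd_two_mul_add_one k)]; gcongr; push_cast; linarith
    _ = ∑ n ∈ (range m).map ⟨(2 * · + 1), fun a b h => by simpa using h⟩, w n / n := by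
        rw [sum_map]; rfl
    _ ≤ ∑ n ∈ Icc 1 X, w n / n := by
        refine sum_le_sum_of_subset_of_nonneg (fun n hn => ?_)
          (fun n _ _ => by have := hw₀ n; positivity)
        obtain ⟨k, hk, rfl⟩ := mem_map.mp hn
        exact mem_Icc.mpr (show 1 ≤ 2 * k + 1 ∧ 2 * k + 1 ≤ X by rw [mem_range] at hk; omega)

theorem sum_pow_le_inv_one_sub {r : ℝ} (hr₀ : 0 ≤ r) (hr₁ : r < 1) (s : Finset ℕ) :
    ∑ n ∈ s, r ^ n ≤ (1 - r)⁻¹ :=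
  calc ∑ n ∈ s, r ^ n ≤ ∑' n, r ^ n :=
        (summable_geometric_of_lt_one hr₀ hr₁).sum_le_tsum s fun _ _ => by positivity
    _ = (1 - r)⁻¹ := tsum_geometric_of_lt_one hr₀ hr₁

/-- `O_f(n)` in the notation of the statement. -/
def orbitCountF (n : ℕ) : ℚ :=
  (1 / (n : ℚ)) * ∑ d ∈ n.divisors,
    (μ (n / d) : ℚ) * (((2 : ℚ) ^ d - 1) * padicNorm 3 ((2 : ℚ) ^ d - 1))

theorem abs_orbitCountF_div_two_pow_sub_le {n : ℕ} (hn : n ≠ 0) :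
    |(orbitCountF n : ℝ) / 2 ^ n - (padicNorm 3 ((2 : ℚ) ^ n - 1) : ℝ) / n| ≤
      3 * (3 / 4) ^ n := by
  have hnorm₀ : ∀ d, (0 : ℝ) ≤ padicNorm 3 ((2 : ℚ) ^ d - 1) := fun _ =>
    Rat.cast_nonneg.mpr (padicNorm.nonneg _)
  have hnorm₁ : ∀ d, (padicNorm 3 ((2 : ℚ) ^ d - 1) : ℝ) ≤ 1 := fun d => by
    exact_mod_cast padicNorm_two_pow_sub_one_le_one 3 d
  set f : ℕ → ℝ := fun d => (2 ^ d - 1) * (padicNorm 3 ((2 : ℚ) ^ d - 1) : ℝ)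
  have hf : ∀ d, |f d| ≤ 2 ^ d := fun d => by
    have h : (0 : ℝ) ≤ 2 ^ d - 1 := sub_nonneg.mpr (one_le_pow₀ (by norm_num))
    rw [abs_of_nonneg (mul_nonneg h (hnorm₀ d))]
    nlinarith [hnorm₁ d]
  have hmain := abs_div_two_pow_sub_le (hnorm₀ n) (hnorm₁ n)
    (abs_sum_divisors_moebius_mul_sub_self_le_two_pow f hf hn)
  have hsplit : (orbitCountF n : ℝ) / 2 ^ n - (padicNorm 3 ((2 : ℚ) ^ n - 1) : ℝ) / n =
      ((∑ d ∈ n.divisors, (μ (n / d) : ℝ) * f d) / 2 ^ n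
        - (padicNorm 3 ((2 : ℚ) ^ n - 1) : ℝ)) / n := by
    simp only [orbitCountF, f]; push_cast; ring
  rw [hsplit, abs_div, Nat.abs_cast]
  exact (div_le_self (abs_nonneg _) (by exact_mod_cast Nat.one_le_iff_ne_zero.mpr hn)).trans hmain

theorem abs_sum_orbitCountF_div_two_pow_sub_le (X : ℕ) :
    |∑ n ∈ Icc 1 X, (orbitCountF n : ℝ) / 2 ^ n
      - ∑ n ∈ Icc 1 X, (padicNorm 3 ((2 : ℚ) ^ n - 1) : ℝ) / n| ≤ 12 := by
  rw [← sum_sub_distrib]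
  calc _ ≤ ∑ n ∈ Icc 1 X, |(orbitCountF n : ℝ) / 2 ^ n
          - (padicNorm 3 ((2 : ℚ) ^ n - 1) : ℝ) / n| := abs_sum_le_sum_abs _ _
    _ ≤ ∑ n ∈ Icc 1 X, 3 * (3 / 4 : ℝ) ^ n := sum_le_sum fun n hn =>
        abs_orbitCountF_div_two_pow_sub_le (by have := (mem_Icc.mp hn).1; omega)
    _ ≤ 12 := by
        have hgeom := sum_pow_le_inv_one_sub (r := 3 / 4) (by norm_num) (by norm_num) (Icc 1 X)
        norm_num at hgeom
        rw [← mul_sum]; linarith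

theorem mertens_for_f :
    ∃ c C : ℝ, ∀ X : ℕ, 2 ≤ X →
      (1 / 2) * Real.log X + c ≤
        (∑ n ∈ Finset.Icc 1 X,
          (((1 / (n : ℚ)) * ∑ d ∈ n.divisors,
            (ArithmeticFunction.moebius (n / d) : ℚ) *
              (((2 : ℚ) ^ d - 1) * padicNorm 3 ((2 : ℚ) ^ d - 1)) : ℚ) : ℝ) / 2 ^ n) ∧
      (∑ n ∈ Finset.Icc 1 X,
          (((1 / (n : ℚ)) * ∑ d ∈ n.divisors,
            (ArithmeticFunction.moebius (n / d) : ℚ) *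
              (((2 : ℚ) ^ d - 1) * padicNorm 3 ((2 : ℚ) ^ d - 1)) : ℚ) : ℝ) / 2 ^ n) ≤
        Real.log X + C := by
  refine ⟨-Real.log 2 / 2 - 12, 13, fun X _ => ?_⟩
  change _ ≤ ∑ n ∈ Icc 1 X, (orbitCountF n : ℝ) / 2 ^ n ∧
    ∑ n ∈ Icc 1 X, (orbitCountF n : ℝ) / 2 ^ n ≤ _
  have hclose := abs_le.mp (abs_sum_orbitCountF_div_two_pow_sub_le X)
  have hlower := half_log_sub_le_sum_Icc_div (fun n => (padicNorm 3 ((2 : ℚ) ^ n - 1) : ℝ))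
    (fun _ => Rat.cast_nonneg.mpr (padicNorm.nonneg _))
    (fun _ hn => by rw [padicNorm_three_two_pow_sub_one_of_odd hn, Rat.cast_one]) X
  have hupper := sum_Icc_div_le_one_add_log (fun n => (padicNorm 3 ((2 : ℚ) ^ n - 1) : ℝ))
    (fun n => by exact_mod_cast padicNorm_two_pow_sub_one_le_one 3 n) X
  constructor <;> linarith [hclose.1, hclose.2]
end
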